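/- arXiv:1606.03328 — 2 statements merged into one kernel-verified Lean document; each statement's English description precedes it below -/
import Mathlib

section
/- Let k be a field of characteristic p > 0 and let V be a nonzero finite-dimensional representation of the cyclic group C_p over k on which C_p acts nontrivially. Then the (p−1)-fold tensor power V^{⊗(p−1)} (with diagonal C_p-action) contains a free k[C_p]-module of rank 1 as a direct summand. -/
open scoped TensorProduct

/-!
Let `g₀` generate `C_p` and `N = g₀ - 1`. In characteristic `p`, `N ^ p = g₀ ^ p - 1 = 0`,
so the nonzero nilpotent `N` has a vector `w` with `N w ≠ 0` and `N² w = 0`, on which `g₀ ^ a`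
acts by `w ↦ w + a • N w`. With functionals `α, β` dual to `(w, N w)` and `v = w ^ ⊗(p - 1)`,
the functional `α ^ ⊗(p - 1) - β ^ ⊗(p - 1)` takes the value `1 - a ^ (p - 1)` at `g₀ ^ a • v`,
which by Fermat is `1` for `a = 0` and `0` otherwise.

Such a pair `(v, f)` splits off `k[G]`: `x ↦ x • v` is an equivariant embedding with
equivariant retraction `t ↦ ∑ g, f (g • t) • g⁻¹`.
-/

/-- Diagonal action of a group element on a tensor power, via `PiTensorProduct.map`. -/
noncomputable def diagAction {k V : Type*} [Field k] [AddCommGroup V] [Module k V]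
    {G : Type*} [Group G] (ρ : Representation k G V) (m : ℕ) (g : G) :
    (⨂[k] (_ : Fin m), V) →ₗ[k] ⨂[k] (_ : Fin m), V :=
  PiTensorProduct.map (fun _ => ρ g)

theorem IsNilpotent.exists_apply_ne_zero_apply_apply_eq_zero {R M : Type*} [Semiring R]
    [AddCommMonoid M] [Module R M] {N : Module.End R M} (hnil : IsNilpotent N) (hN : N ≠ 0) :
    ∃ w, N w ≠ 0 ∧ N (N w) = 0 := by
  obtain ⟨n, hn⟩ := hnil
  obtain ⟨x, hx⟩ : ∃ x, N x ≠ 0 := by simpa [LinearMap.ext_iff] using hN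
  replace hn : (N ^ n) x = 0 := by rw [hn, LinearMap.zero_apply]
  induction n generalizing x with
  | zero => simp_all
  | succ n ih =>
    by_cases hx₂ : N (N x) = 0
    · exact ⟨x, hx, hx₂⟩
    · exact ih (N x) hx₂ (by rwa [← Module.End.mul_apply, ← _root_.pow_succ])

theorem Module.End.pow_apply_eq_add_nsmul {R M : Type*} [Ring R]
    [AddCommGroup M] [Module R M] {T : Module.End R M} {w : M} (hw : (T - 1) ((T - 1) w) = 0)
    (n : ℕ) : (T ^ n) w = w + n • (T - 1) w := by
  induction n with
  | zero => simp
  | succ n ih =>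
    have hTu : T ((T - 1) w) = (T - 1) w := by simpa [sub_eq_zero] using hw
    rw [pow_succ', Module.End.mul_apply, ih, map_add, map_nsmul, hTu, succ_nsmul]
    simp only [LinearMap.sub_apply, Module.End.one_apply]
    abel

theorem Representation.isNilpotent_sub_one_of_pow_eq_one {k G V : Type*} [Field k] [Monoid G]
    [AddCommGroup V] [Module k V] [Nontrivial V] {p : ℕ} [Fact p.Prime] [CharP k p]
    (ρ : Representation k G V) {g : G} (hg : g ^ p = 1) : IsNilpotent (ρ g - 1) := by
  have : CharP (Module.End k V) p := charP_of_injective_algebraMap' k p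
  exact ⟨p, by rw [sub_pow_char_of_commute p (Commute.one_right _), one_pow, ← map_pow, hg,
    map_one, sub_self]⟩

theorem Module.exists_dual_pair_of_apply_apply_eq_zero {k V : Type*} [Field k] [AddCommGroup V]
    [Module k V] {N : Module.End k V} {w : V} (hw₁ : N w ≠ 0) (hw₂ : N (N w) = 0) :
    ∃ α β : Module.Dual k V, α w = 1 ∧ α (N w) = 0 ∧ β w = 0 ∧ β (N w) = 1 := by
  obtain ⟨γ, hγ⟩ := Module.Projective.exists_dual_eq_one k hw₁
  exact ⟨γ ∘ₗ N, γ - γ w • γ ∘ₗ N, hγ, by simp [hw₂], by simp [hγ], by simp [hw₂, hγ]⟩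

theorem ZMod.cast_pow_sub_one_eq_one {k : Type*} [Field k] {p : ℕ} [Fact p.Prime] [CharP k p]
    {a : ZMod p} (ha : a ≠ 0) : (a.cast : k) ^ (p - 1) = 1 := by
  change ZMod.castHom (dvd_refl p) k a ^ (p - 1) = 1
  rw [← map_pow, ZMod.pow_card_sub_one_eq_one ha, map_one]

theorem PiTensorProduct.dualDistrib_tprod_const {k V : Type*} [CommRing k] [AddCommGroup V]
    [Module k V] (n : ℕ) (α : Module.Dual k V) (x : V) :
    dualDistrib (⨂ₜ[k] (_ : Fin n), α) (⨂ₜ[k] (_ : Fin n), x) = α x ^ n := by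
  simp [dualDistrib_apply]

open MonoidAlgebra in
theorem Representation.exists_free_summand_of_dual {k G W : Type*} [CommRing k] [Group G]
    [Fintype G] [AddCommGroup W] [Module k W] (σ : Representation k G W) (v : W)
    (f : W →ₗ[k] k) (hf₁ : f v = 1) (hf : ∀ g ≠ 1, f (σ g v) = 0) :
    ∃ (ι : MonoidAlgebra k G →ₗ[k] W) (π : W →ₗ[k] MonoidAlgebra k G),
      (∀ g x, ι (of k G g * x) = σ g (ι x)) ∧ (∀ g t, π (σ g t) = of k G g * π t) ∧
      π ∘ₗ ι = LinearMap.id := by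
  classical
  let ι : MonoidAlgebra k G →ₗ[k] W := LinearMap.applyₗ v ∘ₗ σ.asAlgebraHom.toLinearMap
  let π : W →ₗ[k] MonoidAlgebra k G := ∑ g, lsingle g⁻¹ ∘ₗ f ∘ₗ σ g
  have hι : ∀ g x, ι (of k G g * x) = σ g (ι x) := fun g x => by simp [ι]
  have hπ_apply : ∀ t, π t = ∑ g, single g⁻¹ (f (σ g t)) := fun t => by simp [π]
  have hπ : ∀ g t, π (σ g t) = of k G g * π t := fun g t => by
    simp only [hπ_apply, Finset.mul_sum, of_apply, single_mul_single, one_mul,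
      ← Module.End.mul_apply, ← map_mul]
    exact Fintype.sum_equiv (Equiv.mulRight g) _ _ fun h => by simp
  have hπv : π v = 1 := by
    rw [hπ_apply, Finset.sum_eq_single 1 (fun g _ hg => by simp [hf g hg]) (by simp)]
    simp [hf₁, one_def]
  refine ⟨ι, π, hι, hπ, lhom_ext' fun g => LinearMap.ext_ring ?_⟩
  have : ι (single g 1) = σ g v := by simp [ι]
  simp [this, hπ, hπv]

noncomputable def Representation.tensorPower {k G V : Type*} [CommSemiring k] [Monoid G]
    [AddCommMonoid V] [Module k V] (ρ : Representation k G V) (m : ℕ) :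
    Representation k G (⨂[k] (_ : Fin m), V) :=
  PiTensorProduct.mapMonoidHom.comp (MonoidHom.pi fun _ => ρ)

theorem Representation.exists_orbit_separating_dual_tensorPower {k V : Type*} [Field k]
    [AddCommGroup V] [Module k V] [Nontrivial V] {p : ℕ} [Fact p.Prime] [CharP k p]
    (ρ : Representation k (Multiplicative (ZMod p)) V) (hρ : ∃ g, ρ g ≠ 1) :
    ∃ (v : ⨂[k] (_ : Fin (p - 1)), V) (f : Module.Dual k (⨂[k] (_ : Fin (p - 1)), V)),
      f v = 1 ∧ ∀ g ≠ 1, f (ρ.tensorPower (p - 1) g v) = 0 := by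
  set g₀ : Multiplicative (ZMod p) := .ofAdd 1
  have hg₀ : ∀ g : Multiplicative (ZMod p), g₀ ^ g.toAdd.val = g := fun g => by
    rw [← ofAdd_nsmul, nsmul_one, ZMod.natCast_zmod_val, ofAdd_toAdd]
  have hN : ρ g₀ - 1 ≠ 0 := by
    obtain ⟨g, hg⟩ := hρ
    intro h
    rw [← hg₀ g, map_pow, sub_eq_zero.mp h, one_pow] at hg
    exact hg rfl
  have hg₀p : g₀ ^ p = 1 := by rw [← ofAdd_nsmul, nsmul_one, ZMod.natCast_self, ofAdd_zero]
  obtain ⟨w, hw₁, hw₂⟩ :=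
    (ρ.isNilpotent_sub_one_of_pow_eq_one hg₀p).exists_apply_ne_zero_apply_apply_eq_zero hN
  obtain ⟨α, β, hαw, hαN, hβw, hβN⟩ :=
    Module.exists_dual_pair_of_apply_apply_eq_zero hw₁ hw₂
  have hact : ∀ g, ρ g w = w + g.toAdd.val • (ρ g₀ - 1) w := fun g => by
    nth_rewrite 1 [← hg₀ g]
    rw [map_pow, Module.End.pow_apply_eq_add_nsmul hw₂]
  have hp : p - 1 ≠ 0 := Nat.sub_ne_zero_of_lt (Fact.out : p.Prime).one_lt
  refine ⟨⨂ₜ[k] _, w, PiTensorProduct.dualDistrib (⨂ₜ[k] _, α) -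
    PiTensorProduct.dualDistrib (⨂ₜ[k] _, β), ?_, fun g hg => ?_⟩
  · rw [LinearMap.sub_apply, PiTensorProduct.dualDistrib_tprod_const,
      PiTensorProduct.dualDistrib_tprod_const, hαw, hβw, one_pow, zero_pow hp, sub_zero]
  · have hg' : g.toAdd ≠ 0 := by simpa using hg
    have htp : ρ.tensorPower (p - 1) g (⨂ₜ[k] _, w) = ⨂ₜ[k] _, ρ g w :=
      PiTensorProduct.map_tprod _ _
    rw [htp, LinearMap.sub_apply, PiTensorProduct.dualDistrib_tprod_const,
      PiTensorProduct.dualDistrib_tprod_const, hact, map_add, map_add, map_nsmul, map_nsmul,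
      hαw, hαN, hβw, hβN]
    simp [ZMod.cast_pow_sub_one_eq_one hg']

theorem stmt_5_general {k V : Type*} [Field k] [AddCommGroup V] [Module k V]
    (p : ℕ) [Fact p.Prime] [CharP k p] (hV : Nontrivial V)
    (ρ : Representation k (Multiplicative (ZMod p)) V)
    (hnontriv : ∃ g, ρ g ≠ LinearMap.id) :
    ∃ (ι : MonoidAlgebra k (Multiplicative (ZMod p)) →ₗ[k] ⨂[k] (_ : Fin (p - 1)), V)
      (π : (⨂[k] (_ : Fin (p - 1)), V) →ₗ[k] MonoidAlgebra k (Multiplicative (ZMod p))),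
      (∀ (g : Multiplicative (ZMod p)) (x : MonoidAlgebra k (Multiplicative (ZMod p))),
        ι (MonoidAlgebra.of k (Multiplicative (ZMod p)) g * x) = diagAction ρ (p - 1) g (ι x)) ∧
      (∀ (g : Multiplicative (ZMod p)) (t : ⨂[k] (_ : Fin (p - 1)), V),
        π (diagAction ρ (p - 1) g t) = MonoidAlgebra.of k (Multiplicative (ZMod p)) g * π t) ∧
      π.comp ι = LinearMap.id := by
  obtain ⟨v, f, hf₁, hf⟩ := ρ.exists_orbit_separating_dual_tensorPower hnontriv
  -- `ρ.tensorPower m g` unfolds to `diagAction ρ m g`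
  exact (ρ.tensorPower (p - 1)).exists_free_summand_of_dual v f hf₁ hf

/-- If `V` is a nonzero finite-dimensional representation of `C_p` over a field of
characteristic `p` with nontrivial action, then `V^{⊗(p-1)}` with the diagonal action
contains a free `k[C_p]`-module of rank 1 as a direct summand. -/
theorem stmt_5 {k V : Type*} [Field k] [AddCommGroup V] [Module k V]
    (p : ℕ) [Fact p.Prime] [CharP k p] [FiniteDimensional k V] (hV : Nontrivial V)
    (ρ : Representation k (Multiplicative (ZMod p)) V)
    (hnontriv : ∃ g, ρ g ≠ LinearMap.id) :
    ∃ (ι : MonoidAlgebra k (Multiplicative (ZMod p)) →ₗ[k] ⨂[k] (_ : Fin (p - 1)), V)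
      (π : (⨂[k] (_ : Fin (p - 1)), V) →ₗ[k] MonoidAlgebra k (Multiplicative (ZMod p))),
      (∀ (g : Multiplicative (ZMod p)) (x : MonoidAlgebra k (Multiplicative (ZMod p))),
        ι (MonoidAlgebra.of k (Multiplicative (ZMod p)) g * x) = diagAction ρ (p - 1) g (ι x)) ∧
      (∀ (g : Multiplicative (ZMod p)) (t : ⨂[k] (_ : Fin (p - 1)), V),
        π (diagAction ρ (p - 1) g t) = MonoidAlgebra.of k (Multiplicative (ZMod p)) g * π t) ∧
      π.comp ι = LinearMap.id :=
  stmt_5_general p hV ρ hnontriv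
end

section
/- Let p be a prime, k a field, α ∈ k, and let V be the k-vector space with basis f₀, f₁, …, f_{p−1}. Define the linear endomorphism N by N(f_i) = Σ_{j=i+1}^{p−1} C(j, i) α^{j−i} f_j (where C(j,i) is the binomial coefficient). Then N^{p−1}(f₀) = (p−1)! · α^{p−1} · f_{p−1}. -/
/-!
`N` raises the index of every basis vector, so `N ^ m f₀` is supported on the indices `≥ m`,
and its coordinate at `m` only sees the superdiagonal entries of `N`: it is the product of
`C(i + 1, i) α = (i + 1) α` over `i < m`, i.e. `m! α ^ m`. Taking `m = p - 1` leaves only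
`f_{p-1}`.
-/

open Finset

namespace Module.End

variable {R : Type*} [CommSemiring R] {n : ℕ}

theorem apply_eq_sum_mul_single (N : Module.End R (Fin n → R)) (v : Fin n → R) (j : Fin n) :
    N v j = ∑ i, v i * N (Pi.single i 1) j := by
  conv_lhs => rw [← univ_sum_single v]
  rw [map_sum, Finset.sum_apply]
  refine sum_congr rfl fun i _ => ?_
  rw [← smul_eq_mul, ← Pi.smul_apply, ← map_smul, ← Pi.single_smul, smul_eq_mul, mul_one]

section StrictlyRaising

variable {N : Module.End R (Fin n → R)}
  (hN : ∀ i j : Fin n, j ≤ i → N (Pi.single i 1) j = 0)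
include hN

theorem apply_eq_zero_of_lt {v : Fin n → R} {m : ℕ}
    (hv : ∀ i : Fin n, (i : ℕ) < m → v i = 0) (j : Fin n) (hj : (j : ℕ) < m + 1) :
    N v j = 0 := by
  rw [apply_eq_sum_mul_single]
  refine sum_eq_zero fun i _ => ?_
  rcases lt_or_ge (i : ℕ) m with hi | hi
  · rw [hv i hi, zero_mul]
  · rw [hN i j (Fin.le_def.2 (by omega)), mul_zero]

theorem apply_of_val_eq_succ {v : Fin n → R} {i j : Fin n}
    (hv : ∀ i' : Fin n, i' < i → v i' = 0) (hij : (j : ℕ) = i + 1) :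
    N v j = v i * N (Pi.single i 1) j := by
  rw [apply_eq_sum_mul_single, sum_eq_single i]
  · intro i' _ hne
    rcases lt_or_gt_of_ne hne with hlt | hgt
    · rw [hv i' hlt, zero_mul]
    · rw [hN i' j (Fin.le_def.2 (by rw [Fin.lt_def] at hgt; omega)), mul_zero]
  · simp

theorem pow_apply_single_zero_of_lt (hn : 0 < n) {m : ℕ} (j : Fin n) (hj : (j : ℕ) < m) :
    (N ^ m) (Pi.single ⟨0, hn⟩ 1) j = 0 := by
  induction m generalizing j with
  | zero => exact absurd hj (Nat.not_lt_zero _)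
  | succ m ih =>
    rw [pow_succ', Module.End.mul_apply]
    exact apply_eq_zero_of_lt hN ih j hj

theorem pow_apply_single_zero_of_val_eq (d : ℕ → R)
    (hd : ∀ i j : Fin n, (j : ℕ) = i + 1 → N (Pi.single i 1) j = d i) (hn : 0 < n) {m : ℕ}
    (j : Fin n) (hj : (j : ℕ) = m) :
    (N ^ m) (Pi.single ⟨0, hn⟩ 1) j = ∏ i ∈ range m, d i := by
  induction m generalizing j with
  | zero =>
    obtain rfl : j = ⟨0, hn⟩ := Fin.ext hj
    simp
  | succ m ih =>
    let i : Fin n := ⟨m, by omega⟩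
    rw [pow_succ', Module.End.mul_apply,
      apply_of_val_eq_succ hN (pow_apply_single_zero_of_lt hN hn) (i := i) hj, ih i rfl,
      hd i j hj, prod_range_succ]

end StrictlyRaising

end Module.End

theorem stmt_10 {k : Type*} [Field k] (p : ℕ) (hp : 0 < p) (α : k)
    (N : Module.End k (Fin p → k))
    (hN : ∀ i : Fin p, N (Pi.single i 1) =
      fun j : Fin p => if i < j then (Nat.choose j i : k) * α ^ ((j : ℕ) - (i : ℕ)) else 0) :
    (N ^ (p - 1)) (Pi.single (⟨0, hp⟩ : Fin p) 1) =
      Pi.single (⟨p - 1, by omega⟩ : Fin p) ((Nat.factorial (p - 1) : k) * α ^ (p - 1)) := by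
  have hraise : ∀ i j : Fin p, j ≤ i → N (Pi.single i 1) j = 0 := fun i j hji => by
    simp [hN, hji.not_gt]
  have hsuper : ∀ i j : Fin p, (j : ℕ) = i + 1 →
      N (Pi.single i 1) j = ((i : ℕ) + 1 : k) * α := fun i j hij => by
    simp [hN, Fin.lt_def, hij, Nat.choose_succ_self_right]
  ext j
  rcases eq_or_ne j ⟨p - 1, by omega⟩ with rfl | hj
  · rw [Module.End.pow_apply_single_zero_of_val_eq hraise (fun m => ((m : k) + 1) * α)
      hsuper hp (m := p - 1) _ rfl,
      Pi.single_eq_same, prod_mul_distrib, prod_const, card_range,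
      ← prod_range_add_one_eq_factorial]
    push_cast
    rfl
  · have hj' : (j : ℕ) < p - 1 := by
      have := Fin.val_ne_of_ne hj
      simp only at this
      omega
    rw [Pi.single_eq_of_ne hj, Module.End.pow_apply_single_zero_of_lt hraise hp j hj']
end
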